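/- Correctness of the reduction (equivalence): the constructed job system admits a feasible schedule if and only if there exists a partition of the index set {1, …, 3n} into n subsets A_1, …, A_n with ∑_{i ∈ A_k} x_i = M for every k (equivalently, a 3-Partition of x_1, …, x_{3n}). This equivalence is the core of the proof that the multi-cluster SRT-WiFi network scheduling problem with rate adaptation (MSNS-RA) is NP-hard in the strong sense. -/

import Mathlib

/-- Release times of the constructed job system: blocker `k` is released at
`2kM`, every partition job at `0`. -/
noncomputable def rel (n M : ℕ) : Fin n ⊕ Fin (3 * n) → ℝ :=
  Sum.elim (fun k => ((2 * (k : ℕ) * M : ℕ) : ℝ)) (fun _ => 0)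

/-- Deadlines of the constructed job system: blocker `k` has deadline
`(2k+1)M`, every partition job has deadline `2nM`. -/
noncomputable def dl (n M : ℕ) : Fin n ⊕ Fin (3 * n) → ℝ :=
  Sum.elim (fun k => (((2 * (k : ℕ) + 1) * M : ℕ) : ℝ)) (fun _ => ((2 * n * M : ℕ) : ℝ))

/-- Lengths of the constructed job system: every blocker has length `M`,
partition job `i` has length `x i`. -/
noncomputable def len (n M : ℕ) (x : Fin (3 * n) → ℕ) : Fin n ⊕ Fin (3 * n) → ℝ :=
  Sum.elim (fun _ => (M : ℝ)) (fun i => (x i : ℝ))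

/-- A schedule (assignment of start times) of the constructed job system is
feasible if every job starts at or after its release time, finishes by its
deadline, and the execution intervals of distinct jobs are pairwise
disjoint. -/
def Feasible (n M : ℕ) (x : Fin (3 * n) → ℕ)
    (sched : Fin n ⊕ Fin (3 * n) → ℝ) : Prop :=
  (∀ j, rel n M j ≤ sched j) ∧
  (∀ j, sched j + len n M x j ≤ dl n M j) ∧
  (∀ j k, j ≠ k →
    Disjoint (Set.Ico (sched j) (sched j + len n M x j))
             (Set.Ico (sched k) (sched k + len n M x k)))

/-!
In a feasible schedule blocker `k` is pinned to `[2kM, (2k+1)M)`, so every partition job, having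
positive length, runs inside one of the gaps `[(2k+1)M, (2k+2)M)`. Disjoint intervals inside a gap
of length `M` have total length at most `M` (compare Lebesgue measures), and as all lengths add up
to `nM`, the jobs in each gap sum to exactly `M`. Conversely, given a 3-partition, run blocker `k`
on `[2kM, (2k+1)M)` and pack the jobs of the `k`-th part back to back into the `k`-th gap.
-/

open Set

theorem Finset.sum_filter_lt_add_le {ι β : Type*} [LinearOrder ι] [AddCommMonoid β]
    [PartialOrder β] [IsOrderedAddMonoid β] {S T : Finset ι} {w : ι → β} {i : ι}
    (hw : ∀ j ∈ T, 0 ≤ w j) (hi : i ∈ T) (hST : {j ∈ S | j < i} ⊆ T) :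
    ∑ j ∈ S with j < i, w j + w i ≤ ∑ j ∈ T, w j := by
  rw [add_comm, ← Finset.sum_insert (by simp)]
  exact Finset.sum_le_sum_of_subset_of_nonneg (Finset.insert_subset hi hST) fun j hj _ => hw j hj

theorem exists_partition_iff_exists_fiber_sum_le {ι κ β : Type*} [Fintype ι] [Fintype κ]
    [DecidableEq κ] [AddCommMonoid β] [PartialOrder β] [IsOrderedCancelAddMonoid β]
    {w : ι → β} {M : β} (hsum : ∑ i, w i = Fintype.card κ • M) :
    (∃ A : κ → Finset ι, (∀ i, ∃! k, i ∈ A k) ∧ ∀ k, ∑ i ∈ A k, w i = M) ↔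
      ∃ K : ι → κ, ∀ k, ∑ i with K i = k, w i ≤ M := by
  constructor
  · rintro ⟨A, hA, hAsum⟩
    choose K hK hKuniq using hA
    have hfiber : ∀ k, ({i | K i = k} : Finset ι) = A k := fun k => by
      ext i
      simp only [Finset.mem_filter_univ]
      exact ⟨fun h => h ▸ hK i, fun h => (hKuniq i k h).symm⟩
    exact ⟨K, fun k => by rw [hfiber, hAsum]⟩
  · rintro ⟨K, hK⟩
    have htotal : ∑ k, ∑ i with K i = k, w i = ∑ _k : κ, M := by
      rw [Finset.sum_fiberwise, hsum, Finset.sum_const, Finset.card_univ]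
    refine ⟨fun k => {i | K i = k}, fun i => ⟨K i, by simp, by simp [eq_comm]⟩, fun k => ?_⟩
    exact (Finset.sum_eq_sum_iff_of_le fun k _ => hK k).1 htotal k (Finset.mem_univ k)

theorem Set.Ico_disjoint_Ico_of_le {α : Type*} [Preorder α] {a b c d : α} (h : b ≤ c) :
    Disjoint (Ico a b) (Ico c d) :=
  Ico_disjoint_Ico_same.mono_right (Ico_subset_Ico_left h)

theorem disjoint_Ico_natCast_mul {p : ℝ} (hp : 0 ≤ p) {j j' : ℕ} (h : j ≠ j') :
    Disjoint (Ico (j * p) ((j + 1) * p)) (Ico (j' * p) ((j' + 1) * p)) := by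
  have key : ∀ {j j' : ℕ}, j < j' →
      Disjoint (Ico (j * p) ((j + 1) * p)) (Ico (j' * p) ((j' + 1) * p)) := fun hlt =>
    Ico_disjoint_Ico_of_le <| by gcongr; exact_mod_cast hlt
  rcases h.lt_or_gt with hlt | hlt
  · exact key hlt
  · exact (key hlt).symm

open MeasureTheory in
theorem sum_le_of_pairwiseDisjoint_Ico_subset {ι : Type*} {A : Finset ι} {s ℓ : ι → ℝ}
    {a b : ℝ} (hab : a ≤ b) (hℓ : ∀ i ∈ A, 0 ≤ ℓ i)
    (hdisj : (A : Set ι).PairwiseDisjoint fun i => Ico (s i) (s i + ℓ i))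
    (hsub : ∀ i ∈ A, Ico (s i) (s i + ℓ i) ⊆ Ico a b) :
    ∑ i ∈ A, ℓ i ≤ b - a := by
  rw [← ENNReal.ofReal_le_ofReal_iff (sub_nonneg.2 hab)]
  calc ENNReal.ofReal (∑ i ∈ A, ℓ i) = ∑ i ∈ A, volume (Ico (s i) (s i + ℓ i)) := by
        simp [ENNReal.ofReal_sum_of_nonneg hℓ]
    _ = volume (⋃ i ∈ A, Ico (s i) (s i + ℓ i)) :=
        (measure_biUnion_finset hdisj fun _ _ => measurableSet_Ico).symm
    _ ≤ volume (Ico a b) := measure_mono (iUnion₂_subset hsub)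
    _ = ENNReal.ofReal (b - a) := Real.volume_Ico

theorem exists_gap_of_forall_disjoint_block {p a b : ℝ} {n : ℕ} (hp : 0 < p) (ha : 0 ≤ a)
    (hab : a < b) (hb : b ≤ 2 * n * p)
    (hdisj : ∀ k < n, Disjoint (Ico a b) (Ico (2 * k * p) ((2 * k + 1) * p))) :
    ∃ k < n, (2 * k + 1) * p ≤ a ∧ b ≤ (2 * k + 2) * p := by
  set m := ⌊a / p⌋₊
  have hma : m * p ≤ a := (le_div_iff₀ hp).1 (Nat.floor_le (div_nonneg ha hp.le))
  have ham : a < (m + 1) * p := (div_lt_iff₀ hp).1 (Nat.lt_floor_add_one _)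
  have hmn : m < 2 * n := by
    have : (m : ℝ) * p < 2 * n * p := hma.trans_lt (hab.trans_le hb)
    exact_mod_cast lt_of_mul_lt_mul_right this hp.le
  obtain ⟨k, hk | hk⟩ := Nat.even_or_odd' m
  · refine absurd (hdisj k (by omega)) (not_disjoint_iff.2 ⟨a, ⟨le_rfl, hab⟩, ?_, ?_⟩)
    all_goals simp only [m, hk, Nat.cast_mul, Nat.cast_ofNat] at hma ham ⊢; linarith
  · have hkn : k < n := by omega
    refine ⟨k, hkn, by simpa [m, hk] using hma, not_lt.1 fun hbk => ?_⟩
    have hk1 : k + 1 < n := by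
      by_contra! hkn'
      have : (n : ℝ) ≤ k + 1 := by exact_mod_cast (by omega : n ≤ k + 1)
      nlinarith
    refine absurd (hdisj (k + 1) hk1) (not_disjoint_iff.2 ⟨(2 * k + 2) * p, ⟨?_, hbk⟩, ?_, ?_⟩)
    all_goals simp only [m, hk, Nat.cast_add, Nat.cast_mul, Nat.cast_ofNat, Nat.cast_one] at ham ⊢
    all_goals nlinarith

namespace Feasible

variable {n M : ℕ} {x : Fin (3 * n) → ℕ} {s : Fin n ⊕ Fin (3 * n) → ℝ}

theorem sched_inl (h : Feasible n M x s) (k : Fin n) : s (.inl k) = 2 * k * M := by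
  have hrel := h.1 (.inl k)
  have hdl := h.2.1 (.inl k)
  simp only [rel, dl, len, Sum.elim_inl] at hrel hdl
  push_cast at hrel hdl
  linarith

theorem exists_gap (h : Feasible n M x s) (hM : 0 < M) {i : Fin (3 * n)} (hxi : 0 < x i) :
    ∃ k : Fin n, Ico (s (.inr i)) (s (.inr i) + x i) ⊆
      Ico ((2 * k + 1) * M : ℝ) ((2 * k + 2) * M) := by
  have hrel := h.1 (.inr i)
  have hdl := h.2.1 (.inr i)
  simp only [rel, dl, len, Sum.elim_inr] at hrel hdl
  push_cast at hdl
  have hblock : ∀ k < n, Disjoint (Ico (s (.inr i)) (s (.inr i) + x i))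
      (Ico (2 * k * M : ℝ) ((2 * k + 1) * M)) := fun k hk => by
    have := h.2.2 (.inr i) (.inl ⟨k, hk⟩) (by simp)
    simpa [sched_inl h, len, add_one_mul] using this
  obtain ⟨k, hk, hlo, hhi⟩ := exists_gap_of_forall_disjoint_block (by exact_mod_cast hM) hrel
    (by simp [hxi]) hdl hblock
  exact ⟨⟨k, hk⟩, Ico_subset_Ico hlo hhi⟩

theorem exists_fiber_sum_le (h : Feasible n M x s) (hM : 0 < M) (hx : ∀ i, 0 < x i) :
    ∃ K : Fin (3 * n) → Fin n, ∀ k, ∑ i with K i = k, x i ≤ M := by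
  choose K hK using fun i => h.exists_gap hM (hx i)
  refine ⟨K, fun k => ?_⟩
  have hdisj : (({i | K i = k} : Finset _) : Set (Fin (3 * n))).PairwiseDisjoint
      fun i => Ico (s (.inr i)) (s (.inr i) + x i) := fun i _ j _ hij => by
    simpa [len] using h.2.2 (.inr i) (.inr j) (by simpa using hij)
  have hsub : ∀ i ∈ ({i | K i = k} : Finset _), Ico (s (.inr i)) (s (.inr i) + x i) ⊆
      Ico ((2 * k + 1) * M : ℝ) ((2 * k + 2) * M) :=
    fun i hi => (Finset.mem_filter_univ i).1 hi ▸ hK i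
  have := sum_le_of_pairwiseDisjoint_Ico_subset (by gcongr; norm_num)
    (fun _ _ => Nat.cast_nonneg _) hdisj hsub
  exact_mod_cast this.trans_eq (by ring : _ = (M : ℝ))

end Feasible

section Packing

variable {n : ℕ} (M : ℕ) (x : Fin (3 * n) → ℕ) (K : Fin (3 * n) → Fin n)

noncomputable def packedSchedule : Fin n ⊕ Fin (3 * n) → ℝ :=
  Sum.elim (fun k => 2 * k * M)
    fun i => (2 * K i + 1) * M + ∑ j ∈ ({j | K j = K i} : Finset _) with j < i, (x j : ℝ)

def slot : Fin n ⊕ Fin (3 * n) → ℕ :=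
  Sum.elim (fun k => 2 * k) fun i => 2 * K i + 1

variable {M x K}

theorem rel_le_slot_mul (j : Fin n ⊕ Fin (3 * n)) : rel n M j ≤ slot K j * M := by
  rcases j with k | i
  · simp [rel, slot]
  · simp only [rel, slot, Sum.elim_inr]
    positivity

theorem slot_add_one_mul_le_dl (j : Fin n ⊕ Fin (3 * n)) : (slot K j + 1) * M ≤ dl n M j := by
  rcases j with k | i
  · simp [dl, slot]
  · simp only [dl, slot, Sum.elim_inr]
    exact_mod_cast Nat.mul_le_mul_right M (by omega)

theorem slot_mul_le_packedSchedule (j : Fin n ⊕ Fin (3 * n)) :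
    slot K j * M ≤ packedSchedule M x K j := by
  rcases j with k | i
  · simp [slot, packedSchedule]
  · simp only [slot, packedSchedule, Sum.elim_inr]
    push_cast
    exact le_add_of_nonneg_right (Finset.sum_nonneg fun _ _ => Nat.cast_nonneg _)

theorem packedSchedule_add_len_le (hK : ∀ k, ∑ i with K i = k, x i ≤ M)
    (j : Fin n ⊕ Fin (3 * n)) : packedSchedule M x K j + len n M x j ≤ (slot K j + 1) * M := by
  rcases j with k | i
  · simp only [packedSchedule, slot, len, Sum.elim_inl]
    push_cast
    linarith
  · have hoff := Finset.sum_filter_lt_add_le (S := ({j | K j = K i} : Finset _))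
      (w := fun j => (x j : ℝ)) (i := i) (fun _ _ => Nat.cast_nonneg _) (by simp)
      (Finset.filter_subset _ _)
    have hfiber : ∑ j with K j = K i, (x j : ℝ) ≤ M := by exact_mod_cast hK (K i)
    simp only [packedSchedule, slot, len, Sum.elim_inr]
    push_cast
    linarith

theorem packedSchedule_add_le_of_lt {i i' : Fin (3 * n)} (hK : K i = K i') (hlt : i < i') :
    packedSchedule M x K (.inr i) + x i ≤ packedSchedule M x K (.inr i') := by
  have := Finset.sum_filter_lt_add_le (S := ({j | K j = K i} : Finset _))
    (w := fun j => (x j : ℝ)) (i := i) (T := {j ∈ ({j | K j = K i} : Finset _) | j < i'})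
    (fun _ _ => Nat.cast_nonneg _) (by simp [hlt]) (fun j hj => by
      simp only [Finset.mem_filter, Finset.mem_univ, true_and] at hj ⊢
      exact ⟨hj.1, hj.2.trans hlt⟩)
  simp only [packedSchedule, Sum.elim_inr, ← hK]
  linarith

theorem feasible_packedSchedule (hK : ∀ k, ∑ i with K i = k, x i ≤ M) :
    Feasible n M x (packedSchedule M x K) := by
  have hsub : ∀ j, Ico (packedSchedule M x K j) (packedSchedule M x K j + len n M x j) ⊆
      Ico (slot K j * M : ℝ) ((slot K j + 1) * M) := fun j =>
    Ico_subset_Ico (slot_mul_le_packedSchedule j) (packedSchedule_add_len_le hK j)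
  refine ⟨fun j => (rel_le_slot_mul j).trans (slot_mul_le_packedSchedule j),
    fun j => (packedSchedule_add_len_le hK j).trans (slot_add_one_mul_le_dl j),
    fun j j' hne => ?_⟩
  by_cases hslot : slot K j = slot K j'
  · rcases j with k | i <;> rcases j' with k' | i' <;>
      simp only [slot, Sum.elim_inl, Sum.elim_inr] at hslot
    · exact absurd (congrArg Sum.inl (Fin.ext (by omega))) hne
    · omega
    · omega
    · have hKi : K i = K i' := Fin.ext (by omega)
      have hii' : i ≠ i' := fun h => hne (h ▸ rfl)
      simp only [len, Sum.elim_inr]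
      rcases hii'.lt_or_gt with hlt | hlt
      · exact Ico_disjoint_Ico_of_le (packedSchedule_add_le_of_lt hKi hlt)
      · exact (Ico_disjoint_Ico_of_le (packedSchedule_add_le_of_lt hKi.symm hlt)).symm
  · exact (disjoint_Ico_natCast_mul M.cast_nonneg hslot).mono (hsub j) (hsub j')

end Packing

theorem feasible_iff_three_partition_general
    (n M : ℕ) (hM : 0 < M)
    (x : Fin (3 * n) → ℕ) (hx : ∀ i, 0 < x i)
    (hsum : ∑ i, x i = n * M) :
    (∃ sched : Fin n ⊕ Fin (3 * n) → ℝ, Feasible n M x sched) ↔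
    (∃ A : Fin n → Finset (Fin (3 * n)),
      (∀ i : Fin (3 * n), ∃! k : Fin n, i ∈ A k) ∧
      (∀ k : Fin n, ∑ i ∈ A k, x i = M)) := by
  rw [exists_partition_iff_exists_fiber_sum_le (by simpa using hsum)]
  exact ⟨fun ⟨_, hs⟩ => hs.exists_fiber_sum_le hM hx,
    fun ⟨K, hK⟩ => ⟨packedSchedule M x K, feasible_packedSchedule hK⟩⟩

/-- **Correctness of the reduction (equivalence).**
The constructed job system admits a feasible schedule if and only if the
index set of the 3-Partition instance can be partitioned into `n` subsets
`A k`, each summing to `M` (i.e., the instance admits a 3-Partition).  This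
equivalence is the core of the proof that MSNS-RA is NP-hard in the strong
sense. -/
theorem feasible_iff_three_partition
    (n M : ℕ) (hn : 0 < n) (hM : 0 < M)
    (x : Fin (3 * n) → ℕ) (hx : ∀ i, 0 < x i)
    (hlow : ∀ i, M < 4 * x i) (hhigh : ∀ i, 2 * x i < M)
    (hsum : ∑ i, x i = n * M) :
    (∃ sched : Fin n ⊕ Fin (3 * n) → ℝ, Feasible n M x sched) ↔
    (∃ A : Fin n → Finset (Fin (3 * n)),
      (∀ i : Fin (3 * n), ∃! k : Fin n, i ∈ A k) ∧
      (∀ k : Fin n, ∑ i ∈ A k, x i = M)) :=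
  feasible_iff_three_partition_general n M hM x hx hsum
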